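/- Let (X_1,Y_1),...,(X_{n+1},Y_{n+1}) be exchangeable pairs, S : X × Y → R a score function with S(X_1,Y_1),...,S(X_{n+1},Y_{n+1}) almost surely distinct, and Q_n the empirical quantile function of S(X_1,Y_1),...,S(X_n,Y_n). Define R(x) = {y : S(x,y) ≤ Q_n(⌈(1−α)(n+1)⌉/n)}. Then P(Y_{n+1} ∈ R(X_{n+1})) ≥ 1−α. -/

import Mathlib

open MeasureTheory
open scoped Classical ENNReal

/-! Under exchangeability with almost surely distinct scores, every index has the same
probability of having rank at most `k` among the `n + 1` scores, and exactly `k` indices do,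
so that probability is `k / (n + 1)`. The test score lies below the `k`-th smallest calibration
score exactly when its rank is at most `k`, and `k = ⌈(1 - α)(n + 1)⌉` makes
`k / (n + 1) ≥ 1 - α`. -/

namespace SplitConformal

open Finset

section Rank

variable {ι β : Type*} [Fintype ι] [LinearOrder β]

def rank (s : ι → β) (j : ι) : ℕ := #{i | s i ≤ s j}

lemma rank_comp_perm (s : ι → β) (σ : Equiv.Perm ι) (j : ι) :
    rank (s ∘ σ) j = rank s (σ j) := by
  refine card_bij (fun i _ => σ i) (by simp) (fun _ _ _ _ h => σ.injective h) fun i hi => ?_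
  exact ⟨σ.symm i, by simpa using hi, by simp⟩

lemma rank_lt_rank {s : ι → β} {a b : ι} (h : s a < s b) : rank s a < rank s b := by
  refine card_lt_card <| (ssubset_iff_of_subset fun i hi => ?_).2 ⟨b, by simp, by simpa using h⟩
  simp only [mem_filter, mem_univ, true_and] at hi ⊢
  exact hi.trans h.le

lemma rank_injective {s : ι → β} (hs : Function.Injective s) : Function.Injective (rank s) := by
  intro a b hab
  rcases lt_trichotomy (s a) (s b) with h | h | h
  · exact absurd hab (rank_lt_rank h).ne
  · exact hs h
  · exact absurd hab (rank_lt_rank h).ne'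

lemma rank_mem_Icc (s : ι → β) (j : ι) : rank s j ∈ Icc 1 (Fintype.card ι) :=
  mem_Icc.2 ⟨card_pos.2 ⟨j, by simp⟩, card_le_univ _⟩

lemma image_rank {s : ι → β} (hs : Function.Injective s) :
    univ.image (rank s) = Icc 1 (Fintype.card ι) :=
  eq_of_subset_of_card_le (image_subset_iff.2 fun j _ => rank_mem_Icc s j) <| by
    rw [card_image_of_injective _ (rank_injective hs), Nat.card_Icc, card_univ]; omega

lemma card_rank_le {s : ι → β} (hs : Function.Injective s) {k : ℕ} (hk : k ≤ Fintype.card ι) :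
    #{j | rank s j ≤ k} = k := by
  have hIcc : {x ∈ Icc 1 (Fintype.card ι) | x ≤ k} = Icc 1 k := by
    ext x
    simp only [mem_filter, mem_Icc]
    omega
  rw [← card_image_of_injective _ (rank_injective hs), ← filter_image (p := (· ≤ k)),
    image_rank hs, hIcc, Nat.card_Icc]
  omega

lemma le_sInf_card_le_iff {γ : Type*} [CompleteLinearOrder γ] (c : ι → γ) (t₀ : γ) {k : ℕ}
    (hk : 1 ≤ k) : t₀ ≤ sInf {t | k ≤ #{i | c i ≤ t}} ↔ #{i | c i < t₀} < k := by
  constructor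
  · intro h
    by_contra! hle
    obtain ⟨j, hj, hmax⟩ := exists_max_image {i | c i < t₀} c (card_pos.1 (hk.trans hle))
    have hmem : k ≤ #{i | c i ≤ c j} :=
      hle.trans <| card_le_card fun i hi => by simpa using hmax i hi
    exact (mem_filter.1 hj).2.not_ge (h.trans (sInf_le hmem))
  · refine fun h => le_sInf fun t ht => le_of_not_gt fun hlt => ?_
    exact (ht.trans (card_le_card fun i => by simpa using fun hi => hi.trans_lt hlt)).not_gt h

lemma rank_last_eq_card_castSucc_lt {n : ℕ} {s : Fin (n + 1) → β} (hs : Function.Injective s) :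
    rank s (Fin.last n) = #{i : Fin n | s i.castSucc < s (Fin.last n)} + 1 := by
  have hlt : ∀ i : Fin n, s i.castSucc < s (Fin.last n) ↔ s i.castSucc ≤ s (Fin.last n) :=
    fun i => lt_iff_le_and_ne.trans <| and_iff_left <| hs.ne (Fin.castSucc_lt_last i).ne
  simp only [rank, card_filter, Fin.sum_univ_castSucc, hlt, le_refl, if_true]

lemma coe_le_sInf_iff_rank_le {n : ℕ} {s : Fin (n + 1) → ℝ} (hs : Function.Injective s) {k : ℕ}
    (hk : 1 ≤ k) :
    ((s (Fin.last n) : EReal) ≤ sInf {t : EReal | k ≤ #{i : Fin n | (s i.castSucc : EReal) ≤ t}})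
      ↔ rank s (Fin.last n) ≤ k := by
  rw [le_sInf_card_le_iff _ _ hk, rank_last_eq_card_castSucc_lt hs]
  simp only [EReal.coe_lt_coe_iff]
  omega

lemma measurable_rank (j : ι) : Measurable fun s : ι → ℝ => rank s j := by
  have h : (fun s : ι → ℝ => rank s j) = fun s => ∑ i, if s i ≤ s j then 1 else 0 :=
    funext fun s => card_filter _ _
  rw [h]
  exact measurable_sum _ fun i _ => Measurable.ite
    (measurableSet_le (measurable_pi_apply i) (measurable_pi_apply j)) measurable_const
    measurable_const

end Rank

variable {ι Ω γ δ : Type*} [MeasurableSpace Ω] [MeasurableSpace γ] [MeasurableSpace δ]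

lemma sum_measure_eq_lintegral_card [Fintype ι] (μ : Measure Ω) {E : ι → Set Ω}
    (hE : ∀ j, MeasurableSet (E j)) : ∑ j, μ (E j) = ∫⁻ ω, #{j | ω ∈ E j} ∂μ := by
  simp_rw [← lintegral_indicator_one (hE _)]
  rw [← lintegral_finsetSum _ fun j _ => measurable_one.indicator (hE j)]
  congr with ω
  simp [Set.indicator_apply, sum_boole]

def Exchangeable (P : Measure Ω) (Z : Ω → ι → γ) : Prop :=
  ∀ σ : Equiv.Perm ι, P.map (fun ω i => Z ω (σ i)) = P.map Z

namespace Exchangeable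

variable {P : Measure Ω} {Z : Ω → ι → γ}

lemma measurable_comp_perm (hZm : Measurable Z) (σ : Equiv.Perm ι) :
    Measurable fun ω i => Z ω (σ i) :=
  measurable_pi_lambda _ fun i => (measurable_pi_apply (σ i)).comp hZm

lemma comp (hZ : Exchangeable P Z) (hZm : Measurable Z) {f : γ → δ} (hf : Measurable f) :
    Exchangeable P fun ω i => f (Z ω i) := by
  have hF : Measurable fun (z : ι → γ) i => f (z i) :=
    measurable_pi_lambda _ fun i => hf.comp (measurable_pi_apply i)
  intro σ
  have h := congrArg (Measure.map fun (z : ι → γ) i => f (z i)) (hZ σ)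
  rwa [Measure.map_map hF (measurable_comp_perm hZm σ), Measure.map_map hF hZm] at h

lemma measure_perm_mem (hZ : Exchangeable P Z) (hZm : Measurable Z) {B : Set (ι → γ)}
    (hB : MeasurableSet B) (σ : Equiv.Perm ι) :
    P {ω | (fun i => Z ω (σ i)) ∈ B} = P {ω | Z ω ∈ B} := by
  calc P {ω | (fun i => Z ω (σ i)) ∈ B} = P.map (fun ω i => Z ω (σ i)) B :=
        (Measure.map_apply (measurable_comp_perm hZm σ) hB).symm
    _ = P {ω | Z ω ∈ B} := by rw [hZ σ, Measure.map_apply hZm hB]; rfl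

lemma measure_rank_le [Fintype ι] [IsProbabilityMeasure P] {V : Ω → ι → ℝ}
    (hV : Exchangeable P V) (hVm : Measurable V) (hinj : ∀ᵐ ω ∂P, Function.Injective (V ω)) {k : ℕ}
    (hk : k ≤ Fintype.card ι) (j : ι) :
    P {ω | rank (V ω) j ≤ k} = k / Fintype.card ι := by
  have hE : ∀ j, MeasurableSet {ω | rank (V ω) j ≤ k} := fun j =>
    measurableSet_le ((measurable_rank j).comp hVm) measurable_const
  have hsame : ∀ j', P {ω | rank (V ω) j' ≤ k} = P {ω | rank (V ω) j ≤ k} := fun j' => by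
    have h : P {ω | rank (V ω ∘ Equiv.swap j' j) j' ≤ k} = P {ω | rank (V ω) j' ≤ k} :=
      hV.measure_perm_mem hVm (measurableSet_le (measurable_rank j') measurable_const) _
    simp_rw [← h, rank_comp_perm, Equiv.swap_apply_left]
  have hsum : ∑ j', P {ω | rank (V ω) j' ≤ k} = k := by
    rw [sum_measure_eq_lintegral_card P hE, lintegral_congr_ae (g := fun _ => (k : ℝ≥0∞)),
      lintegral_const, measure_univ, mul_one]
    filter_upwards [hinj] with ω hω
    norm_cast
    convert card_rank_le hω hk
  have hcard : (Fintype.card ι : ℝ≥0∞) ≠ 0 := by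
    simpa using (Fintype.card_pos_iff.2 ⟨j⟩).ne'
  rw [ENNReal.eq_div_iff hcard (ENNReal.natCast_ne_top _), ← hsum,
    sum_congr rfl fun j' _ => hsame j', sum_const, card_univ, nsmul_eq_mul]

end Exchangeable

end SplitConformal

open SplitConformal in
theorem stmt15_general {Ω 𝒳 𝒴 : Type*} [MeasurableSpace Ω] [MeasurableSpace 𝒳] [MeasurableSpace 𝒴]
    (P : Measure Ω) [IsProbabilityMeasure P] (n : ℕ)
    (X : Fin (n + 1) → Ω → 𝒳) (Y : Fin (n + 1) → Ω → 𝒴)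
    (hX : ∀ i, Measurable (X i)) (hY : ∀ i, Measurable (Y i))
    (hexch : ∀ σ : Equiv.Perm (Fin (n + 1)),
      Measure.map (fun ω i => (X (σ i) ω, Y (σ i) ω)) P =
        Measure.map (fun ω i => (X i ω, Y i ω)) P)
    (S : 𝒳 × 𝒴 → ℝ) (hS : Measurable S)
    (hdist : ∀ᵐ ω ∂P, Function.Injective (fun i : Fin (n + 1) => S (X i ω, Y i ω)))
    (α : ℝ) (hα : α ∈ Set.Ioo (0 : ℝ) 1)
    -- `Q ω` is the `⌈(1-α)(n+1)⌉`-th smallest calibration score (`⊤` if that index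
    -- exceeds `n`)
    (Q : Ω → EReal)
    (hQ : ∀ ω, Q ω = sInf {t : EReal |
      (⌈(1 - α) * (n + 1 : ℝ)⌉).toNat ≤ (Finset.univ.filter
        (fun i : Fin n => (S (X i.castSucc ω, Y i.castSucc ω) : EReal) ≤ t)).card}) :
    ENNReal.ofReal (1 - α) ≤
      P {ω | (S (X (Fin.last n) ω, Y (Fin.last n) ω) : EReal) ≤ Q ω} := by
  obtain ⟨hα₀, hα₁⟩ := hα
  set k := ⌈(1 - α) * (n + 1 : ℝ)⌉.toNat
  have hk : k = ⌈(1 - α) * (n + 1 : ℝ)⌉₊ := Int.ceil_toNat _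
  have hk₁ : 1 ≤ k := hk ▸ Nat.one_le_ceil_iff.2 (by nlinarith)
  have hkn : k ≤ n + 1 := hk ▸ Nat.ceil_le.2 (by push_cast; nlinarith)
  have hZm : Measurable fun ω i => (X i ω, Y i ω) :=
    measurable_pi_lambda _ fun i => (hX i).prodMk (hY i)
  have hVm : Measurable fun ω i => S (X i ω, Y i ω) :=
    measurable_pi_lambda _ fun i => hS.comp ((hX i).prodMk (hY i))
  have hV : Exchangeable P fun ω i => S (X i ω, Y i ω) :=
    Exchangeable.comp (Z := fun ω i => (X i ω, Y i ω)) hexch hZm hS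
  have hevent : {ω | (S (X (Fin.last n) ω, Y (Fin.last n) ω) : EReal) ≤ Q ω}
      =ᵐ[P] {ω | rank (fun i => S (X i ω, Y i ω)) (Fin.last n) ≤ k} := by
    refine Filter.eventuallyEq_set.2 ?_
    filter_upwards [hdist] with ω hω
    rw [hQ ω]
    exact coe_le_sInf_iff_rank_le hω hk₁
  rw [measure_congr hevent, hV.measure_rank_le hVm hdist (by simpa using hkn),
    Fintype.card_fin, ENNReal.le_div_iff_mul_le (by simp) (by simp),
    ← ENNReal.ofReal_natCast, ← ENNReal.ofReal_mul (by linarith), ← ENNReal.ofReal_natCast k, hk]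
  exact ENNReal.ofReal_le_ofReal (by simpa using Nat.le_ceil _)

theorem stmt15 {Ω 𝒳 𝒴 : Type*} [MeasurableSpace Ω] [MeasurableSpace 𝒳] [MeasurableSpace 𝒴]
    (P : Measure Ω) [IsProbabilityMeasure P] (n : ℕ) (hn : 0 < n)
    (X : Fin (n + 1) → Ω → 𝒳) (Y : Fin (n + 1) → Ω → 𝒴)
    (hX : ∀ i, Measurable (X i)) (hY : ∀ i, Measurable (Y i))
    (hexch : ∀ σ : Equiv.Perm (Fin (n + 1)),
      Measure.map (fun ω i => (X (σ i) ω, Y (σ i) ω)) P =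
        Measure.map (fun ω i => (X i ω, Y i ω)) P)
    (S : 𝒳 × 𝒴 → ℝ) (hS : Measurable S)
    (hdist : ∀ᵐ ω ∂P, Function.Injective (fun i : Fin (n + 1) => S (X i ω, Y i ω)))
    (α : ℝ) (hα : α ∈ Set.Ioo (0 : ℝ) 1)
    -- `Q ω` is the `⌈(1-α)(n+1)⌉`-th smallest calibration score (`⊤` if that index
    -- exceeds `n`)
    (Q : Ω → EReal)
    (hQ : ∀ ω, Q ω = sInf {t : EReal |
      (⌈(1 - α) * (n + 1 : ℝ)⌉).toNat ≤ (Finset.univ.filter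
        (fun i : Fin n => (S (X i.castSucc ω, Y i.castSucc ω) : EReal) ≤ t)).card}) :
    ENNReal.ofReal (1 - α) ≤
      P {ω | (S (X (Fin.last n) ω, Y (Fin.last n) ω) : EReal) ≤ Q ω} :=
  stmt15_general P n X Y hX hY hexch S hS hdist α hα Q hQ
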